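/- For every real number $k \geq 0$, $\int_0^\infty \big(\operatorname{sech}(2\rho) - k\,\log(\tanh\rho)\big)\,\sinh(2\rho)\cosh(2\rho)\,\big(\log(\tanh\rho)\big)^2\,d\rho = \frac{\pi^2(2+3k)}{24}$. Consequently the function $\xi_{(0)}(\rho) = \frac{1}{\pi}\left(\frac{24}{2+3k}\right)^{1/2}\log(\tanh\rho)$ satisfies $\int_0^\infty \mu(\rho)\,\xi_{(0)}(\rho)^2\,d\rho = 1$ with $\mu(\rho) = H(\rho)\,\sinh(2\rho)\cosh(2\rho)$ and $H(\rho) = \operatorname{sech}(2\rho) - k\log(\tanh\rho)$. -/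

import Mathlib

open Set Real

open MeasureTheory

lemma tanh_mem_Ioo {ρ : ℝ} (hρ : 0 < ρ) : Real.tanh ρ ∈ Ioo (0:ℝ) 1 := by
  constructor
  · rw [Real.tanh_eq_sinh_div_cosh]
    exact div_pos (Real.sinh_pos_iff.2 hρ) (Real.cosh_pos ρ)
  · rw [Real.tanh_eq_sinh_div_cosh, div_lt_one (Real.cosh_pos ρ)]
    have h := Real.cosh_sub_sinh ρ
    have := Real.exp_pos (-ρ)
    linarith

lemma hasDerivAt_tanh' (x : ℝ) : HasDerivAt Real.tanh (1 - Real.tanh x ^ 2) x := by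
  have h : HasDerivAt (fun y => Real.sinh y / Real.cosh y)
      ((Real.cosh x * Real.cosh x - Real.sinh x * Real.sinh x) / Real.cosh x ^ 2) x :=
    (Real.hasDerivAt_sinh x).div (Real.hasDerivAt_cosh x) (Real.cosh_pos x).ne'
  have e : Real.tanh = fun y => Real.sinh y / Real.cosh y :=
    funext fun y => Real.tanh_eq_sinh_div_cosh y
  rw [e]
  convert h using 1
  have h2 := Real.cosh_sq_sub_sinh_sq x
  have hc := (Real.cosh_pos x).ne'
  simp only []
  field_simp

lemma one_sub_tanh_sq_pos (x : ℝ) : 0 < 1 - Real.tanh x ^ 2 := by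
  have h2 := Real.cosh_sq_sub_sinh_sq x
  have hc := Real.cosh_pos x
  rw [Real.tanh_eq_sinh_div_cosh, div_pow]
  rw [sub_pos, div_lt_one (by positivity)]
  nlinarith

lemma strictMono_tanh : StrictMono Real.tanh := by
  apply strictMono_of_deriv_pos
  intro x
  rw [(hasDerivAt_tanh' x).deriv]
  exact one_sub_tanh_sq_pos x

lemma exists_tanh_eq {c : ℝ} (hc : c ∈ Ioo (0:ℝ) 1) : ∃ ρ > 0, Real.tanh ρ = c := by
  obtain ⟨hc0, hc1⟩ := hc
  set A : ℝ := (1+c)/(1-c) with hA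
  have hc1' : (0:ℝ) < 1 - c := by linarith
  have hA1 : 1 < A := by
    rw [hA, lt_div_iff₀ hc1']
    linarith
  have hA0 : 0 < A := by linarith
  set s : ℝ := Real.sqrt A with hs
  have hs1 : 1 < s := by
    rw [hs]
    nlinarith [Real.sq_sqrt hA0.le, Real.sqrt_nonneg A]
  have hs0 : 0 < s := by linarith
  refine ⟨Real.log s, Real.log_pos hs1, ?_⟩
  have hexp : Real.exp (Real.log s) = s := Real.exp_log hs0
  have hs2 : s ^ 2 = A := Real.sq_sqrt hA0.le
  rw [Real.tanh_eq_sinh_div_cosh, Real.sinh_eq, Real.cosh_eq, Real.exp_neg, hexp]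
  have hsum : 0 < s + s⁻¹ := by positivity
  have h2 : s^2 * (1 - c) = 1 + c := by rw [hs2, hA]; field_simp
  rw [div_div_div_cancel_right₀, div_eq_iff hsum.ne']
  · field_simp
    nlinarith [h2]
  · exact two_ne_zero


noncomputable def fsub : ℝ → ℝ := fun ρ => -2 * Real.log (Real.tanh ρ)
noncomputable def fsub' : ℝ → ℝ := fun ρ => -2 * ((1 - Real.tanh ρ ^ 2) / Real.tanh ρ)

lemma hasDerivAt_fsub {ρ : ℝ} (hρ : 0 < ρ) : HasDerivAt fsub (fsub' ρ) ρ := by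
  obtain ⟨ht0, ht1⟩ := tanh_mem_Ioo hρ
  have hlog : HasDerivAt (fun y => Real.log (Real.tanh y))
      ((Real.tanh ρ)⁻¹ * (1 - Real.tanh ρ ^ 2)) ρ :=
    (Real.hasDerivAt_log ht0.ne').comp ρ (hasDerivAt_tanh' ρ)
  have := hlog.const_mul (-2 : ℝ)
  convert this using 1
  · rfl
  · rfl
  · rfl
  unfold fsub'
  field_simp

lemma injOn_fsub : InjOn fsub (Ioi (0:ℝ)) := by
  have : StrictAntiOn fsub (Ioi (0:ℝ)) := by
    intro a ha b hb hab
    have h1 := strictMono_tanh hab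
    have ha0 := (tanh_mem_Ioo ha).1
    unfold fsub
    have := Real.log_lt_log ha0 h1
    nlinarith
  exact this.injOn

lemma image_fsub : fsub '' (Ioi (0:ℝ)) = Ioi (0:ℝ) := by
  ext x
  constructor
  · rintro ⟨ρ, hρ, rfl⟩
    obtain ⟨ht0, ht1⟩ := tanh_mem_Ioo hρ
    have := Real.log_neg ht0 ht1
    simp only [fsub, mem_Ioi]
    nlinarith
  · intro hx
    have hx : (0:ℝ) < x := hx
    have hc : Real.exp (-x/2) ∈ Ioo (0:ℝ) 1 := by
      constructor
      · exact Real.exp_pos _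
      · rw [Real.exp_lt_one_iff]
        linarith
    obtain ⟨ρ, hρ, hρc⟩ := exists_tanh_eq hc
    refine ⟨ρ, hρ, ?_⟩
    simp only [fsub, hρc, Real.log_exp]
    ring



noncomputable def Gfun (k : ℝ) : ℝ → ℝ := fun x =>
  (x^2/4 * (1/(1-Real.exp (-x))^2) + k*x^3/8 * ((1+Real.exp (-x))/(1-Real.exp (-x))^3))
    * Real.exp (-x)

lemma subident (k : ℝ) {ρ : ℝ} (hρ : 0 < ρ) :
    |fsub' ρ| * Gfun k (fsub ρ) =
      (1 / Real.cosh (2*ρ) - k * Real.log (Real.tanh ρ)) *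
        (Real.sinh (2*ρ) * Real.cosh (2*ρ)) * (Real.log (Real.tanh ρ))^2 := by
  obtain ⟨ht0, ht1⟩ := tanh_mem_Ioo hρ
  set t := Real.tanh ρ with htdef
  set L := Real.log t with hLdef
  have ht2 : (0:ℝ) < 1 - t^2 := by nlinarith
  have hexp : Real.exp (-(fsub ρ)) = t^2 := by
    have h : (-(fsub ρ)) = ((2:ℕ):ℝ) * L := by simp only [fsub]; push_cast; ring
    rw [h, Real.exp_nat_mul, Real.exp_log ht0]
  have hst : Real.sinh ρ = t * Real.cosh ρ := by
    rw [htdef, Real.tanh_eq_sinh_div_cosh]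
    field_simp
  have hc2 : Real.cosh ρ ^ 2 * (1 - t^2) = 1 := by
    have h := Real.cosh_sq_sub_sinh_sq ρ
    linear_combination h + (Real.sinh ρ + t * Real.cosh ρ) * hst
  have e1 : Real.sinh (2*ρ) = 2*t/(1-t^2) := by
    rw [Real.sinh_two_mul, hst, eq_div_iff ht2.ne']
    linear_combination 2*t*hc2
  have e2 : Real.cosh (2*ρ) = (1+t^2)/(1-t^2) := by
    rw [Real.cosh_two_mul, hst, eq_div_iff ht2.ne']
    linear_combination (1+t^2)*hc2
  have habs : |fsub' ρ| = 2*((1-t^2)/t) := by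
    have h : fsub' ρ = -(2*((1-t^2)/t)) := by simp only [fsub']; ring
    rw [h, abs_neg, abs_of_pos (by positivity)]
  have hf : fsub ρ = -2*L := rfl
  rw [habs, e1, e2]
  show 2*((1-t^2)/t) *
    (((fsub ρ)^2/4 * (1/(1-Real.exp (-(fsub ρ)))^2)
      + k*(fsub ρ)^3/8 * ((1+Real.exp (-(fsub ρ)))/(1-Real.exp (-(fsub ρ)))^3))
      * Real.exp (-(fsub ρ))) = _
  rw [hexp, hf]
  have h1pt : (0:ℝ) < 1 + t^2 := by positivity
  field_simp
  ring


noncomputable def Ffun (k : ℝ) (n : ℕ) : ℝ → ℝ := fun x =>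
  (((n:ℝ)+1)*x^2/4 + k*((n:ℝ)+1)^2*x^3/8) * Real.exp (-(((n:ℝ)+1)*x))

lemma hasSum_Ffun (k : ℝ) {x : ℝ} (hx : 0 < x) :
    HasSum (fun n => Ffun k n x) (Gfun k x) := by
  set r := Real.exp (-x) with hr
  have hr0 : 0 < r := Real.exp_pos _
  have hr1 : r < 1 := by rw [hr, Real.exp_lt_one_iff]; linarith
  have hnorm : ‖r‖ < 1 := by rw [Real.norm_eq_abs, abs_of_pos hr0]; exact hr1
  have h1 : HasSum (fun n : ℕ => ((n:ℝ)+1) * r^n) (1/(1-r)^2) := by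
    have h := hasSum_choose_mul_geometric_of_norm_lt_one 1 hnorm (𝕜 := ℝ)
    have e : (fun n : ℕ => ((((n:ℕ)+1).choose 1 : ℕ):ℝ) * r ^ n)
        = fun n : ℕ => ((n:ℝ)+1) * r^n := by
      funext n; simp [Nat.choose_one_right]
    rw [e] at h
    convert h using 2
  have h2 : HasSum (fun n : ℕ => ((n:ℝ)+1)*((n:ℝ)+2) * r^n) (2/(1-r)^3) := by
    have h := (hasSum_choose_mul_geometric_of_norm_lt_one 2 hnorm (𝕜 := ℝ)).mul_left 2
    convert h using 1
    · rfl
    · funext n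
      have he : (n+1) * (n+2) = 2 * ((n + 2).choose 2) := by
        rw [Nat.choose_two_right]
        have h0 : n + 2 - 1 = n + 1 := rfl
        rw [h0, Nat.mul_div_cancel']
        · ring
        · exact even_iff_two_dvd.mp (by simpa [mul_comm] using Nat.even_mul_succ_self (n+1))
      have hc : (((n:ℝ))+1)*((n:ℝ)+2) = 2 * (((n + 2).choose 2 : ℕ) : ℝ) := by
        rw [← Nat.cast_ofNat, ← Nat.cast_mul, ← he]; push_cast; ring
      rw [hc]; ring
    · ring
  have h3 : HasSum (fun n : ℕ => ((n:ℝ)+1)^2 * r^n) ((1+r)/(1-r)^3) := by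
    have h := h2.sub h1
    have hne : (1:ℝ) - r ≠ 0 := by linarith
    convert h using 1
    · rfl
    · funext n
      ring
    · field_simp
      ring
  have h4 := ((h1.mul_left (x^2/4)).add (h3.mul_left (k*x^3/8))).mul_right r
  convert h4 using 1
  · rfl
  funext n
  simp only [Ffun]
  have he : Real.exp (-(((n:ℝ)+1)*x)) = r^n * r := by
    have h : (-(((n:ℝ)+1)*x)) = ((n+1:ℕ):ℝ) * (-x) := by push_cast; ring
    rw [h, Real.exp_nat_mul, ← hr, pow_succ]
  rw [he]
  ring
  rfl


lemma integrableOn_pow_exp (m : ℕ) {b : ℝ} (hb : 0 < b) :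
    IntegrableOn (fun x : ℝ => x^m * Real.exp (-(b*x))) (Ioi (0:ℝ)) := by
  have h := integrableOn_rpow_mul_exp_neg_mul_rpow (s := (m:ℝ)) (p := 1) (b := b)
    (by exact_mod_cast neg_one_lt_zero.trans_le (Nat.cast_nonneg m)) one_pos hb
  apply h.congr_fun ?_ measurableSet_Ioi
  intro x hx
  have hx : (0:ℝ) < x := hx
  simp only [Real.rpow_one, Real.rpow_natCast]
  ring_nf

lemma integral_pow_exp (m : ℕ) {b : ℝ} (hb : 0 < b) :
    ∫ x in Ioi (0:ℝ), x^m * Real.exp (-(b*x)) = (Nat.factorial m) / b^(m+1) := by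
  have h := Real.integral_rpow_mul_exp_neg_mul_Ioi (a := (m:ℝ)+1) (r := b) (by positivity) hb
  have e : ∀ x ∈ Ioi (0:ℝ), x ^ ((m:ℝ) + 1 - 1) * Real.exp (-(b*x))
      = x^m * Real.exp (-(b*x)) := by
    intro x hx
    rw [show ((m:ℝ) + 1 - 1) = ((m:ℕ):ℝ) by ring, Real.rpow_natCast]
  rw [setIntegral_congr_fun measurableSet_Ioi e] at h
  rw [Real.Gamma_nat_eq_factorial] at h
  rw [show ((m:ℝ)+1) = (((m+1:ℕ)):ℝ) by push_cast; ring, Real.rpow_natCast] at h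
  rw [h, one_div, inv_pow, ← one_div]
  field_simp

lemma hasSum_inv_sq : HasSum (fun n : ℕ => 1/((n:ℝ)+1)^2) (π^2/6) := by
  have h := hasSum_zeta_two
  have h2 := (hasSum_nat_add_iff' (f := fun n : ℕ => (1:ℝ)/(n:ℝ)^2) 1).2 h
  simp only [Finset.range_one, Finset.sum_singleton, Nat.cast_zero] at h2
  norm_num at h2
  convert h2 using 2 with n
  · rfl
  ring



lemma Ffun_eq (k : ℝ) (n : ℕ) : ∀ x ∈ Ioi (0:ℝ), Ffun k n x =
    (((n:ℝ)+1)/4) * (x^2 * Real.exp (-((((n:ℝ)+1))*x)))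
      + (k*((n:ℝ)+1)^2/8) * (x^3 * Real.exp (-((((n:ℝ)+1))*x))) := by
  intro x _
  simp only [Ffun]
  ring

lemma integrableOn_Ffun (k : ℝ) (n : ℕ) : IntegrableOn (Ffun k n) (Ioi (0:ℝ)) := by
  have hb : (0:ℝ) < (n:ℝ)+1 := by positivity
  have h2 := (integrableOn_pow_exp 2 hb).const_mul (((n:ℝ)+1)/4)
  have h3 := (integrableOn_pow_exp 3 hb).const_mul (k*((n:ℝ)+1)^2/8)
  have hadd : IntegrableOn (fun x : ℝ =>
      (((n:ℝ)+1)/4) * (x^2 * Real.exp (-((((n:ℝ)+1))*x)))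
        + (k*((n:ℝ)+1)^2/8) * (x^3 * Real.exp (-((((n:ℝ)+1))*x)))) (Ioi (0:ℝ)) := h2.add h3
  exact hadd.congr_fun (fun x hx => (Ffun_eq k n x hx).symm) measurableSet_Ioi

lemma integral_Ffun (k : ℝ) (n : ℕ) :
    ∫ x in Ioi (0:ℝ), Ffun k n x = ((2+3*k)/4) * (1/((n:ℝ)+1)^2) := by
  have hb : (0:ℝ) < (n:ℝ)+1 := by positivity
  rw [setIntegral_congr_fun measurableSet_Ioi (Ffun_eq k n)]
  rw [integral_add ((integrableOn_pow_exp 2 hb).const_mul _)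
    ((integrableOn_pow_exp 3 hb).const_mul _), integral_const_mul, integral_const_mul,
    integral_pow_exp 2 hb, integral_pow_exp 3 hb]
  have hne : ((n:ℝ)+1) ≠ 0 := hb.ne'
  simp only [Nat.factorial]
  push_cast
  field_simp
  ring

lemma nonneg_Ffun (k : ℝ) (hk : 0 ≤ k) (n : ℕ) : ∀ x ∈ Ioi (0:ℝ), 0 ≤ Ffun k n x := by
  intro x hx
  have hx : (0:ℝ) < x := hx
  have := Real.exp_pos (-(((n:ℝ)+1)*x))
  simp only [Ffun]
  positivity

lemma interchange (k : ℝ) (hk : 0 ≤ k) :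
    ∫ x in Ioi (0:ℝ), Gfun k x = Real.pi^2 * (2+3*k) / 24 := by
  have hG : ∫ x in Ioi (0:ℝ), Gfun k x = ∫ x in Ioi (0:ℝ), ∑' n, Ffun k n x :=
    setIntegral_congr_fun measurableSet_Ioi
      (fun x hx => ((hasSum_Ffun k hx).tsum_eq).symm)
  have hnorm : ∀ n : ℕ, (∫ x in Ioi (0:ℝ), ‖Ffun k n x‖)
      = ((2+3*k)/4) * (1/((n:ℝ)+1)^2) := by
    intro n
    rw [setIntegral_congr_fun measurableSet_Ioi
      (fun x hx => Real.norm_of_nonneg (nonneg_Ffun k hk n x hx))]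
    exact integral_Ffun k n
  have hsum : HasSum (fun n : ℕ => ((2+3*k)/4) * (1/((n:ℝ)+1)^2))
      (((2+3*k)/4) * (π^2/6)) := hasSum_inv_sq.mul_left _
  have h := integral_tsum_of_summable_integral_norm
    (F := Ffun k) (μ := volume.restrict (Ioi (0:ℝ)))
    (fun n => integrableOn_Ffun k n) (by
      apply Summable.congr hsum.summable
      intro n
      exact (hnorm n).symm)
  rw [hG, ← h]
  have : ∑' n, ∫ x in Ioi (0:ℝ), Ffun k n x = ((2+3*k)/4) * (π^2/6) := by
    rw [tsum_congr (fun n => integral_Ffun k n)]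
    exact hsum.tsum_eq
  rw [this]
  ring


/-- Normalisation of the graviton zero mode on the resolved D3-brane on Eguchi-Hanson space:
for `k ≥ 0`, with `H(ρ) = sech(2ρ) - k log(tanh ρ)` and measure `μ = H sinh(2ρ) cosh(2ρ)`,
one has `∫₀^∞ μ (log tanh ρ)² dρ = π²(2+3k)/24`, and hence
`ξ₀(ρ) = (1/π) √(24/(2+3k)) log(tanh ρ)` satisfies `∫₀^∞ μ ξ₀² dρ = 1`. -/
theorem resolvedD3_zero_mode_normalisation (k : ℝ) (hk : 0 ≤ k) :
    (∫ ρ in Ioi (0:ℝ),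
        (1 / Real.cosh (2*ρ) - k * Real.log (Real.tanh ρ)) *
          (Real.sinh (2*ρ) * Real.cosh (2*ρ)) * (Real.log (Real.tanh ρ))^2)
      = Real.pi^2 * (2 + 3*k) / 24 ∧
    (∫ ρ in Ioi (0:ℝ),
        ((1 / Real.cosh (2*ρ) - k * Real.log (Real.tanh ρ)) *
          (Real.sinh (2*ρ) * Real.cosh (2*ρ))) *
          ((1/Real.pi) * Real.sqrt (24/(2+3*k)) * Real.log (Real.tanh ρ))^2) = 1 := by
  have hder : ∀ ρ ∈ Ioi (0:ℝ), HasDerivWithinAt fsub (fsub' ρ) (Ioi (0:ℝ)) ρ :=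
    fun ρ hρ => (hasDerivAt_fsub hρ).hasDerivWithinAt
  have hsub := integral_image_eq_integral_abs_deriv_smul measurableSet_Ioi hder injOn_fsub
    (Gfun k)
  rw [image_fsub] at hsub
  have h1 : (∫ ρ in Ioi (0:ℝ),
      (1 / Real.cosh (2*ρ) - k * Real.log (Real.tanh ρ)) *
        (Real.sinh (2*ρ) * Real.cosh (2*ρ)) * (Real.log (Real.tanh ρ))^2)
      = Real.pi^2 * (2 + 3*k) / 24 := by
    calc (∫ ρ in Ioi (0:ℝ),
        (1 / Real.cosh (2*ρ) - k * Real.log (Real.tanh ρ)) *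
          (Real.sinh (2*ρ) * Real.cosh (2*ρ)) * (Real.log (Real.tanh ρ))^2)
        = ∫ ρ in Ioi (0:ℝ), |fsub' ρ| • Gfun k (fsub ρ) := by
          refine setIntegral_congr_fun measurableSet_Ioi (fun ρ hρ => ?_)
          rw [smul_eq_mul, subident k hρ]
      _ = ∫ x in Ioi (0:ℝ), Gfun k x := hsub.symm
      _ = Real.pi^2 * (2 + 3*k) / 24 := interchange k hk
  refine ⟨h1, ?_⟩
  have hc : (0:ℝ) < 2 + 3*k := by linarith
  have hπ := Real.pi_ne_zero
  have he : ∀ ρ ∈ Ioi (0:ℝ),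
      ((1 / Real.cosh (2*ρ) - k * Real.log (Real.tanh ρ)) *
        (Real.sinh (2*ρ) * Real.cosh (2*ρ))) *
        ((1/Real.pi) * Real.sqrt (24/(2+3*k)) * Real.log (Real.tanh ρ))^2
      = (24/((2+3*k)*Real.pi^2)) *
        ((1 / Real.cosh (2*ρ) - k * Real.log (Real.tanh ρ)) *
          (Real.sinh (2*ρ) * Real.cosh (2*ρ)) * (Real.log (Real.tanh ρ))^2) := by
    intro ρ _
    rw [mul_pow, mul_pow, Real.sq_sqrt (by positivity : (0:ℝ) ≤ 24/(2+3*k))]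
    field_simp
  rw [setIntegral_congr_fun measurableSet_Ioi he, integral_const_mul, h1]
  field_simp
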